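/- Let d, d' ≥ 0 be integers with d + d' ≥ 1, and let Γ be a connected directed graph without self-loops with vertex set Γ₀ (|Γ₀| = n) and edge set Γ₁ (|Γ₁| = m ≥ 1). Define the smooth map φ : (ℝ^d)^{Γ₀} × (ℝ^{d'})^{Γ₀} × (0,∞)^{Γ₁} → (ℝ^d)^{Γ₁} × (ℝ^{d'})^{Γ₁} by φ((a^i), (q^i), (t_e))_e = ( (a^{h(e)} − a^{t(e)})/(2 t_e), (q^{h(e)} − q^{t(e)})/(2 √t_e) ). If (d + d') n < (d + d' − 1) m + d + d' + 1, then at every point of the domain the Fréchet derivative of φ is not surjective; indeed its rank is at most (d + d') n + m − (d + d' + 1), because the derivative annihilates the d + d' translation vectors Σ_i ∂/∂a^i_j (1 ≤ j ≤ d), Σ_i ∂/∂q^i_j (1 ≤ j ≤ d'), and the scaling vector Σ_e t_e ∂/∂t_e + Σ_{i,j} a^i_j ∂/∂a^i_j + (1/2) Σ_{i,j} q^i_j ∂/∂q^i_j. -/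

import Mathlib

open Matrix MeasureTheory
open scoped BigOperators Classical

/-- A directed graph with `n + 1` vertices (indexed by `Fin (n + 1)`) and `m` edges
(indexed by `Fin m`), given by head and tail maps and having no self-loops. -/
structure DGraph (n m : ℕ) where
  head : Fin m → Fin (n + 1)
  tail : Fin m → Fin (n + 1)
  no_self_loop : ∀ e, head e ≠ tail e

namespace DGraph

variable {n m : ℕ}

/-- The incidence matrix: `ρ e i = 1` if `head e = i`, `-1` if `tail e = i`, `0` otherwise. -/
def inc (G : DGraph n m) : Matrix (Fin m) (Fin (n + 1)) ℝ := fun e i =>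
  if G.head e = i then 1 else if G.tail e = i then -1 else 0

/-- The underlying undirected (simple) adjacency graph determined by a set of edges. -/
def adjGraph (G : DGraph n m) (S : Set (Fin m)) : SimpleGraph (Fin (n + 1)) :=
  SimpleGraph.fromRel (fun i j => ∃ e ∈ S, G.head e = i ∧ G.tail e = j)

/-- Connectedness of the underlying undirected multigraph. -/
def Conn (G : DGraph n m) : Prop := (G.adjGraph Set.univ).Connected

/-- A spanning tree: a set of `n` edges (one fewer than the number `n + 1` of vertices)
whose edges connect all the vertices. -/
def IsSpanningTree (G : DGraph n m) (T : Finset (Fin m)) : Prop :=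
  T.card = n ∧ (G.adjGraph (T : Set (Fin m))).Connected

/-- The weighted Laplacian `M_Γ(t)_{ij} = ∑_e ρ^e_i (1/t_e) ρ^e_j` over the first `n`
vertices (the last vertex deleted). -/
noncomputable def lap (G : DGraph n m) (t : Fin m → ℝ) : Matrix (Fin n) (Fin n) ℝ :=
  fun i j => ∑ e, G.inc e i.castSucc * (1 / t e) * G.inc e j.castSucc

/-- The reduced incidence matrix: delete the column of the last vertex. -/
def redInc (G : DGraph n m) : Matrix (Fin m) (Fin n) ℝ := fun e i => G.inc e i.castSucc

end DGraph

/-- The map `φ((a^i), (q^i), (t_e)) = ((a^{h(e)} - a^{t(e)})/(2 t_e),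
(q^{h(e)} - q^{t(e)})/(2 √t_e))` built from the Schwinger parameters of a graph. -/
noncomputable def phiMap {n m : ℕ} (d d' : ℕ) (G : DGraph n m) :
    ((Fin (n + 1) → Fin d → ℝ) × (Fin (n + 1) → Fin d' → ℝ) × (Fin m → ℝ)) →
      ((Fin m → Fin d → ℝ) × (Fin m → Fin d' → ℝ)) :=
  fun p =>
    (fun e k => (p.1 (G.head e) k - p.1 (G.tail e) k) / (2 * p.2.2 e),
     fun e k => (p.2.1 (G.head e) k - p.2.1 (G.tail e) k) / (2 * Real.sqrt (p.2.2 e)))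

/-!
`φ` is unchanged when all `a^i` (or all `q^i`) are translated by a common vector, and under the
scaling `(a, q, t) ↦ (s a, √s q, s t)` for `s > 0`. Differentiating these symmetries gives
`d + d' + 1` vectors in the kernel of `Dφ`: the translations span a `(d + d')`-dimensional space,
and the scaling vector lies outside it because its `t`-component `t` is nonzero once there is
an edge. Rank–nullity bounds the rank by `(d + d') n + m - (d + d' + 1)`, which the counting
inequality makes smaller than `(d + d') m`, the dimension of the target.
-/

open Topology

section

variable {E F : Type*} [NormedAddCommGroup E] [NormedSpace ℝ E]
  [NormedAddCommGroup F] [NormedSpace ℝ F] {f : E → F} {p v : E}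

theorem fderiv_apply_eq_zero_of_eventually_const_comp {γ : ℝ → E} {s : ℝ}
    (hf : DifferentiableAt ℝ f p) (hγ : HasDerivAt γ v s) (hγs : γ s = p)
    (hconst : ∀ᶠ c in 𝓝 s, f (γ c) = f p) :
    fderiv ℝ f p v = 0 := by
  rw [← hγs] at hf hconst ⊢
  have hcomp : HasDerivAt (f ∘ γ) (fderiv ℝ f (γ s) v) s :=
    hf.hasFDerivAt.comp_hasDerivAt s hγ
  exact hcomp.unique ((hasDerivAt_const s (f (γ s))).congr_of_eventuallyEq hconst)

theorem fderiv_apply_eq_zero_of_forall_add_smul (h : ∀ c : ℝ, f (p + c • v) = f p) :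
    fderiv ℝ f p v = 0 := by
  by_cases hf : DifferentiableAt ℝ f p
  · refine fderiv_apply_eq_zero_of_eventually_const_comp hf (γ := fun c : ℝ => p + c • v)
      (s := 0) ?_ (by simp) (.of_forall h)
    simpa using ((hasDerivAt_id (0 : ℝ)).smul_const v).const_add p
  · simp [fderiv_zero_of_not_differentiableAt hf]

end

/-- `(v, w) ↦ (fun _ => v, fun _ => w, 0)`. -/
def vertexTranslation (n m d d' : ℕ) : (Fin d → ℝ) × (Fin d' → ℝ) →ₗ[ℝ]
    (Fin (n + 1) → Fin d → ℝ) × (Fin (n + 1) → Fin d' → ℝ) × (Fin m → ℝ) :=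
  (LinearMap.pi fun _ => LinearMap.fst ℝ _ _).prod
    ((LinearMap.pi fun _ => LinearMap.snd ℝ _ _).prod 0)

theorem vertexTranslation_injective (n m d d' : ℕ) :
    Function.Injective (vertexTranslation n m d d') := fun _ _ h =>
  Prod.ext (congrFun (congrArg Prod.fst h) 0) (congrFun (congrArg (·.2.1) h) 0)

section

variable {n m d d' : ℕ} (G : DGraph n m)
  (p : (Fin (n + 1) → Fin d → ℝ) × (Fin (n + 1) → Fin d' → ℝ) × (Fin m → ℝ))

theorem differentiableAt_phiMap (hp : ∀ e, 0 < p.2.2 e) :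
    DifferentiableAt ℝ (phiMap d d' G) p := by
  refine DifferentiableAt.prodMk ?_ ?_ <;>
    refine differentiableAt_pi.mpr fun e => differentiableAt_pi.mpr fun k => ?_ <;>
    fun_prop (disch := simp [(hp e).ne', Real.sqrt_ne_zero'.mpr (hp e)])

theorem phiMap_add_const_fst (v : Fin d → ℝ) :
    phiMap d d' G (p + ((fun _ => v), 0, 0)) = phiMap d d' G p := by
  simp [phiMap]

theorem phiMap_add_const_snd (w : Fin d' → ℝ) :
    phiMap d d' G (p + (0, (fun _ => w), 0)) = phiMap d d' G p := by
  simp [phiMap]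

theorem phiMap_scale {s : ℝ} (hs : 0 < s) :
    phiMap d d' G (s • p.1, √s • p.2.1, s • p.2.2) = phiMap d d' G p := by
  ext e k <;> simp only [phiMap, Pi.smul_apply, smul_eq_mul, ← mul_sub, Real.sqrt_mul hs.le]
  · rw [mul_left_comm, mul_div_mul_left _ _ hs.ne']
  · rw [mul_left_comm, mul_div_mul_left _ _ (Real.sqrt_pos.mpr hs).ne']

theorem fderiv_phiMap_const_fst (v : Fin d → ℝ) :
    fderiv ℝ (phiMap d d' G) p ((fun _ => v), 0, 0) = 0 :=
  fderiv_apply_eq_zero_of_forall_add_smul fun c => by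
    simpa [Pi.smul_def] using phiMap_add_const_fst G p (c • v)

theorem fderiv_phiMap_const_snd (w : Fin d' → ℝ) :
    fderiv ℝ (phiMap d d' G) p (0, (fun _ => w), 0) = 0 :=
  fderiv_apply_eq_zero_of_forall_add_smul fun c => by
    simpa [Pi.smul_def] using phiMap_add_const_snd G p (c • w)

theorem fderiv_phiMap_scaling (hp : ∀ e, 0 < p.2.2 e) :
    fderiv ℝ (phiMap d d' G) p (p.1, (1 / 2 : ℝ) • p.2.1, p.2.2) = 0 := by
  refine fderiv_apply_eq_zero_of_eventually_const_comp (differentiableAt_phiMap G p hp)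
    (γ := fun s => (s • p.1, √s • p.2.1, s • p.2.2)) (s := 1) ?_ (by simp) ?_
  · have hsqrt : HasDerivAt Real.sqrt (1 / 2) 1 := by
      simpa using Real.hasDerivAt_sqrt one_ne_zero
    simpa using ((hasDerivAt_id (1 : ℝ)).smul_const p.1).prodMk
      ((hsqrt.smul_const p.2.1).prodMk ((hasDerivAt_id (1 : ℝ)).smul_const p.2.2))
  · filter_upwards [eventually_gt_nhds one_pos] with s hs using phiMap_scale G p hs

theorem add_one_le_finrank_ker_fderiv_phiMap (hm : 1 ≤ m) (hp : ∀ e, 0 < p.2.2 e) :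
    d + d' + 1 ≤ Module.finrank ℝ (LinearMap.ker (fderiv ℝ (phiMap d d' G) p).toLinearMap) := by
  set T := vertexTranslation n m d d'
  set f := (fderiv ℝ (phiMap d d' G) p).toLinearMap
  have hT : LinearMap.range T ≤ LinearMap.ker f := by
    rintro _ ⟨⟨v, w⟩, rfl⟩
    have hsplit : T (v, w) = ((fun _ => v), 0, 0) + (0, (fun _ => w), 0) := by
      ext <;> simp [T, vertexTranslation]
    simp only [LinearMap.mem_ker, f, ContinuousLinearMap.coe_coe, hsplit, map_add,
      fderiv_phiMap_const_fst, fderiv_phiMap_const_snd, add_zero]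
  have hscaling : (p.1, (1 / 2 : ℝ) • p.2.1, p.2.2) ∉ LinearMap.range T := by
    rintro ⟨x, hx⟩
    have ht := congrArg (·.2.2 ⟨0, hm⟩) hx
    simp only [T, vertexTranslation, LinearMap.prod_apply] at ht
    exact (hp _).ne ht
  calc d + d' + 1 = Module.finrank ℝ (LinearMap.range T) + 1 := by
        rw [LinearMap.finrank_range_of_inj (vertexTranslation_injective n m d d')]; simp
    _ ≤ Module.finrank ℝ (LinearMap.ker f) :=
        Submodule.finrank_lt_finrank_of_lt (SetLike.lt_iff_le_and_exists.mpr
          ⟨hT, _, fderiv_phiMap_scaling G p hp, hscaling⟩)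

end

theorem phiMap_derivative_not_surjective_general {n m : ℕ} (d d' : ℕ)
    (hm : 1 ≤ m) (G : DGraph n m)
    (hcount : ((d : ℤ) + d') * (n + 1) < ((d : ℤ) + d' - 1) * m + ((d : ℤ) + d' + 1))
    (p : (Fin (n + 1) → Fin d → ℝ) × (Fin (n + 1) → Fin d' → ℝ) × (Fin m → ℝ))
    (hp : ∀ e, 0 < p.2.2 e) :
    ¬ Function.Surjective (fderiv ℝ (phiMap d d' G) p) ∧
    ((Module.finrank ℝ (LinearMap.range (fderiv ℝ (phiMap d d' G) p).toLinearMap) : ℤ) ≤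
      ((d : ℤ) + d') * (n + 1) + m - ((d : ℤ) + d' + 1)) ∧
    (∀ v : Fin d → ℝ, fderiv ℝ (phiMap d d' G) p ((fun _ => v), 0, 0) = 0) ∧
    (∀ w : Fin d' → ℝ, fderiv ℝ (phiMap d d' G) p (0, (fun _ => w), 0) = 0) ∧
    fderiv ℝ (phiMap d d' G) p (p.1, (1 / 2 : ℝ) • p.2.1, p.2.2) = 0 := by
  set f := (fderiv ℝ (phiMap d d' G) p).toLinearMap
  have hker := add_one_le_finrank_ker_fderiv_phiMap G p hm hp
  have hrank_nullity : Module.finrank ℝ (LinearMap.range f) + Module.finrank ℝ (LinearMap.ker f)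
      = (n + 1) * d + ((n + 1) * d' + m) := by
    simpa [Module.finrank_pi_fintype] using LinearMap.finrank_range_add_finrank_ker f
  have hrank : (Module.finrank ℝ (LinearMap.range f) : ℤ) ≤
      ((d : ℤ) + d') * (n + 1) + m - ((d : ℤ) + d' + 1) := by
    zify at hker hrank_nullity
    linarith
  refine ⟨fun hsurj => ?_, hrank, fderiv_phiMap_const_fst G p, fderiv_phiMap_const_snd G p,
    fderiv_phiMap_scaling G p hp⟩
  have hfull : Module.finrank ℝ (LinearMap.range f) = m * d + m * d' := by
    rw [LinearMap.range_eq_top.mpr hsurj, finrank_top]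
    simp [Module.finrank_pi_fintype]
  push_cast [hfull] at hrank
  linarith

/-- If `Γ` is connected without self-loops and
`(d + d') |Γ₀| < (d + d' - 1) |Γ₁| + d + d' + 1`, then at every point of the domain
(where all Schwinger parameters are positive) the derivative of `φ` is not surjective:
its rank is at most `(d + d') |Γ₀| + |Γ₁| - (d + d' + 1)`, because the derivative
annihilates the `d + d'` translation vectors and the scaling vector
`∑ t_e ∂_{t_e} + ∑ a^i_j ∂_{a^i_j} + (1/2) ∑ q^i_j ∂_{q^i_j}`. -/
theorem phiMap_derivative_not_surjective {n m : ℕ} (d d' : ℕ) (hdd' : 1 ≤ d + d')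
    (hm : 1 ≤ m) (G : DGraph n m) (hG : G.Conn)
    (hcount : ((d : ℤ) + d') * (n + 1) < ((d : ℤ) + d' - 1) * m + ((d : ℤ) + d' + 1))
    (p : (Fin (n + 1) → Fin d → ℝ) × (Fin (n + 1) → Fin d' → ℝ) × (Fin m → ℝ))
    (hp : ∀ e, 0 < p.2.2 e) :
    ¬ Function.Surjective (fderiv ℝ (phiMap d d' G) p) ∧
    ((Module.finrank ℝ (LinearMap.range (fderiv ℝ (phiMap d d' G) p).toLinearMap) : ℤ) ≤
      ((d : ℤ) + d') * (n + 1) + m - ((d : ℤ) + d' + 1)) ∧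
    (∀ v : Fin d → ℝ, fderiv ℝ (phiMap d d' G) p ((fun _ => v), 0, 0) = 0) ∧
    (∀ w : Fin d' → ℝ, fderiv ℝ (phiMap d d' G) p (0, (fun _ => w), 0) = 0) ∧
    fderiv ℝ (phiMap d d' G) p (p.1, (1 / 2 : ℝ) • p.2.1, p.2.2) = 0 :=
  phiMap_derivative_not_surjective_general d d' hm G hcount p hp
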